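/- If the cost matrix C (with h_p = h_q = h) satisfies C ≥ 0 and C_{i,j} = 0 ⇒ i = j, then ICT(p,q) = 0 implies p = q, and likewise ACT_k(p,q) = 0 implies p = q for any k ≥ 1. -/

import Mathlib

/-!
A transport plan of zero cost can only use zero-cost entries, and for an effective cost matrix
these lie on the diagonal; so the plan keeps each `p i` in place and its capacity constraint on
the diagonal entry reads `p i ≤ q i`. Two histograms of equal mass with `p ≤ q` coincide.
For `ACT_k` the only capacity constraint needed is the one on the cheapest entry of each row, which
is the diagonal one as soon as that row carries mass.
-/

open Finset

section ZeroCostPlan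

variable {ι : Type*} [Fintype ι] {F C : ι → ι → ℝ}

theorem mul_eq_zero_of_sum_sum_mul_eq_zero (hF : ∀ i j, 0 ≤ F i j) (hC : ∀ i j, 0 ≤ C i j)
    (h0 : ∑ i, ∑ j, F i j * C i j = 0) (i j : ι) : F i j * C i j = 0 := by
  have hrow := (Fintype.sum_eq_zero_iff_of_nonneg fun i =>
    sum_nonneg fun j _ => mul_nonneg (hF i j) (hC i j)).mp h0
  exact congrFun ((Fintype.sum_eq_zero_iff_of_nonneg fun j =>
    mul_nonneg (hF i j) (hC i j)).mp (congrFun hrow i)) j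

theorem diag_eq_sum_of_sum_sum_mul_eq_zero (hF : ∀ i j, 0 ≤ F i j) (hC : ∀ i j, 0 ≤ C i j)
    (heff : ∀ i j, C i j = 0 → i = j) (h0 : ∑ i, ∑ j, F i j * C i j = 0) (i : ι) :
    F i i = ∑ j, F i j := by
  refine (Fintype.sum_eq_single i fun j hj => ?_).symm
  exact (mul_eq_zero.mp (mul_eq_zero_of_sum_sum_mul_eq_zero hF hC h0 i j)).resolve_right
    fun hCij => hj (heff i j hCij).symm

end ZeroCostPlan

theorem Equiv.Perm.apply_zero_eq_of_apply_eq_zero {n : ℕ} {c : Fin (n + 1) → ℝ}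
    {σ : Equiv.Perm (Fin (n + 1))} (hσ : Monotone (c ∘ σ)) (hc : ∀ j, 0 ≤ c j) {i : Fin (n + 1)}
    (hci : c i = 0) (heff : ∀ j, c j = 0 → i = j) : σ 0 = i := by
  refine (heff _ (le_antisymm ?_ (hc _))).symm
  calc c (σ 0) ≤ c (σ (σ.symm i)) := hσ (Fin.zero_le _)
    _ = 0 := by rw [σ.apply_symm_apply, hci]

theorem eq_of_le_of_sum_eq {ι : Type*} [Fintype ι] {p q : ι → ℝ} (hle : ∀ i, p i ≤ q i)
    (hsum : ∑ i, p i = ∑ i, q i) : p = q :=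
  funext fun i => (sum_eq_sum_iff_of_le fun i _ => hle i).mp hsum i (mem_univ i)

theorem stmt_12_general (h : ℕ) (p q : Fin (h + 1) → ℝ)
    (hqnn : ∀ j, 0 ≤ q j)
    (hpsum : ∑ i, p i = 1) (hqsum : ∑ j, q j = 1)
    (C : Fin (h + 1) → Fin (h + 1) → ℝ) (hC : ∀ i j, 0 ≤ C i j)
    (heff : ∀ i j, C i j = 0 → i = j) :
    (IsLeast
      {c : ℝ | ∃ F : Fin (h + 1) → Fin (h + 1) → ℝ,
        (∀ i j, 0 ≤ F i j) ∧ (∀ i, ∑ j, F i j = p i) ∧ (∀ i j, F i j ≤ q j) ∧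
        c = ∑ i, ∑ j, F i j * C i j} 0 → p = q) ∧
    (∀ k : ℕ, 1 ≤ k →
      ∀ s : Fin (h + 1) → Equiv.Perm (Fin (h + 1)),
        (∀ i, ∀ l l' : Fin (h + 1), l ≤ l' → C i (s i l) ≤ C i (s i l')) →
        IsLeast
          {c : ℝ | ∃ F : Fin (h + 1) → Fin (h + 1) → ℝ,
            (∀ i j, 0 ≤ F i j) ∧ (∀ i, ∑ j, F i j = p i) ∧
            (∀ i, ∀ l : Fin (h + 1), (l : ℕ) < k → F i (s i l) ≤ q (s i l)) ∧
            c = ∑ i, ∑ j, F i j * C i j} 0 → p = q) := by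
  have hmass : ∑ i, p i = ∑ i, q i := hpsum.trans hqsum.symm
  constructor
  · rintro ⟨⟨F, hF, hrow, hcap, hc⟩, -⟩
    refine eq_of_le_of_sum_eq (fun i => ?_) hmass
    rw [← hrow, ← diag_eq_sum_of_sum_sum_mul_eq_zero hF hC heff hc.symm]
    exact hcap i i
  · rintro k hk s hs ⟨⟨F, hF, hrow, hcap, hc⟩, -⟩
    refine eq_of_le_of_sum_eq (fun i => ?_) hmass
    rw [← hrow, ← diag_eq_sum_of_sum_sum_mul_eq_zero hF hC heff hc.symm]
    rcases (hF i i).eq_or_lt with hFii | hFii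
    · exact hFii ▸ hqnn i
    · have hCii : C i i = 0 := (mul_eq_zero.mp
        (mul_eq_zero_of_sum_sum_mul_eq_zero hF hC hc.symm i i)).resolve_left hFii.ne'
      have hs0 : s i 0 = i := Equiv.Perm.apply_zero_eq_of_apply_eq_zero
        (fun l l' hl => hs i l l' hl) (hC i) hCii (heff i)
      simpa only [hs0] using hcap i 0 hk

/-- If the cost matrix is effective, then `ICT(p,q) = 0` implies `p = q`, and likewise
`ACT_k(p,q) = 0` implies `p = q` for every `k ≥ 1`. -/
theorem stmt_12 (h : ℕ) (p q : Fin (h + 1) → ℝ)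
    (hpnn : ∀ i, 0 ≤ p i) (hqnn : ∀ j, 0 ≤ q j)
    (hpsum : ∑ i, p i = 1) (hqsum : ∑ j, q j = 1)
    (C : Fin (h + 1) → Fin (h + 1) → ℝ) (hC : ∀ i j, 0 ≤ C i j)
    (heff : ∀ i j, C i j = 0 → i = j) :
    (IsLeast
      {c : ℝ | ∃ F : Fin (h + 1) → Fin (h + 1) → ℝ,
        (∀ i j, 0 ≤ F i j) ∧ (∀ i, ∑ j, F i j = p i) ∧ (∀ i j, F i j ≤ q j) ∧
        c = ∑ i, ∑ j, F i j * C i j} 0 → p = q) ∧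
    (∀ k : ℕ, 1 ≤ k →
      ∀ s : Fin (h + 1) → Equiv.Perm (Fin (h + 1)),
        (∀ i, ∀ l l' : Fin (h + 1), l ≤ l' → C i (s i l) ≤ C i (s i l')) →
        IsLeast
          {c : ℝ | ∃ F : Fin (h + 1) → Fin (h + 1) → ℝ,
            (∀ i j, 0 ≤ F i j) ∧ (∀ i, ∑ j, F i j = p i) ∧
            (∀ i, ∀ l : Fin (h + 1), (l : ℕ) < k → F i (s i l) ≤ q (s i l)) ∧
            c = ∑ i, ∑ j, F i j * C i j} 0 → p = q) :=
  stmt_12_general h p q hqnn hpsum hqsum C hC heff
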